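/- For every odd positive integer k and d = 2k + 1, the multiset over Z_2^d of length 2d + 2 consisting of the elements 0, e_1, e_2, ..., e_{d-1}, e_1 + e_2 + ... + e_{d-1}, e_d, e_d + e_1, e_d + e_2, ..., e_d + e_{d-1}, and e_d + e_1 + e_2 + ... + e_{d-1}, is a zero-sum sequence that contains no zero-sum subsequence of length 2k. -/

import Mathlib

/-!
Write `X = {0, e₁, …, e_{2k}, σ}` with `σ = e₁ + ⋯ + e_{2k}`; the sequence is `X ∪ (e_d + X)`,
whose sum is `(2k + 2) • e_d = 0`. A subsequence has the form `T₁ ∪ (e_d + T₂)` with `T₁, T₂ ⊆ X`.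
If it is zero-sum, the last coordinate forces `|T₂|` to be even, and then `ΣT₁ = ΣT₂`. As the
`e_j` are independent, `T₁` and `T₂` contain the same unit vectors if both or neither contain `σ`
(so their lengths differ only through `0`, by at most one), and complementary sets of unit vectors
otherwise (so `|T₁| + |T₂| > 2k`). A zero-sum subsequence of length `2k` would therefore have
`|T₁| = |T₂| = k`, which is odd, while `|T₂|` is even.
-/

open Finset

namespace Multiset

variable {α β : Type*}

theorem exists_eq_add_of_le_add {s t u : Multiset α} (h : u ≤ s + t) :
    ∃ s' ≤ s, ∃ t' ≤ t, u = s' + t' := by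
  induction u using Quotient.inductionOn
  induction s using Quotient.inductionOn
  induction t using Quotient.inductionOn
  obtain ⟨l, hperm, hsub⟩ := coe_le.mp h
  obtain ⟨l₁, l₂, rfl, h₁, h₂⟩ := List.sublist_append_iff.mp hsub
  exact ⟨l₁, h₁.subperm, l₂, h₂.subperm,
    (coe_eq_coe.mpr hperm.symm).trans (coe_add l₁ l₂).symm⟩

theorem exists_eq_map_of_le_map {f : α → β} {s : Multiset α} {u : Multiset β}
    (h : u ≤ s.map f) : ∃ t ≤ s, u = t.map f := by
  induction u using Quotient.inductionOn
  induction s using Quotient.inductionOn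
  obtain ⟨l, hperm, hsub⟩ := coe_le.mp h
  obtain ⟨l', hl', rfl⟩ := List.sublist_map_iff.mp hsub
  exact ⟨l', hl'.subperm, (coe_eq_coe.mpr hperm.symm).trans (map_coe f l').symm⟩

theorem sum_map_add_left {M : Type*} [AddCommMonoid M] (v : M) (s : Multiset M) :
    (s.map (v + ·)).sum = card s • v + s.sum := by
  rw [sum_map_add, map_const', sum_replicate, map_id']

end Multiset

namespace ZeroSumConstruction

variable {ι : Type*}

lemma pi_zmod_two_add_self (x : ι → ZMod 2) : x + x = 0 :=
  funext fun i => CharTwo.add_self_eq_zero (x i)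

variable [DecidableEq ι]

lemma sum_single_injective :
    Function.Injective fun A : Finset ι => (∑ j ∈ A, Pi.single j 1 : ι → ZMod 2) := by
  intro A B h
  ext i
  have hi := congrFun h i
  simp only [Finset.sum_apply, Finset.sum_pi_single] at hi
  split_ifs at hi <;> simp_all

lemma sum_single_sdiff {A E : Finset ι} (h : A ⊆ E) :
    (∑ j ∈ E \ A, Pi.single j 1 : ι → ZMod 2) =
      ∑ j ∈ A, Pi.single j 1 + ∑ j ∈ E, Pi.single j 1 := by
  rw [← sum_sdiff h, add_left_comm, pi_zmod_two_add_self, add_zero]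

def unitVectorSeq (E : Finset ι) : Multiset (ι → ZMod 2) :=
  {0} + E.val.map (fun j => Pi.single j 1) + {∑ j ∈ E, Pi.single j 1}

lemma card_unitVectorSeq (E : Finset ι) : Multiset.card (unitVectorSeq E) = #E + 2 := by
  simp [unitVectorSeq]

lemma exists_of_le_unitVectorSeq {E : Finset ι} {T : Multiset (ι → ZMod 2)}
    (h : T ≤ unitVectorSeq E) :
    ∃ A ⊆ E, ∃ u w : ℕ, u ≤ 1 ∧ w ≤ 1 ∧ Multiset.card T = u + #A + w ∧
      T.sum = ∑ j ∈ A, Pi.single j 1 + w • ∑ j ∈ E, Pi.single j 1 := by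
  obtain ⟨T', hT', W, hW, rfl⟩ := Multiset.exists_eq_add_of_le_add h
  obtain ⟨U, hU, M, hM, rfl⟩ := Multiset.exists_eq_add_of_le_add hT'
  obtain ⟨A, hA, rfl⟩ := Multiset.exists_eq_map_of_le_map hM
  have hU0 : U.sum = 0 :=
    Multiset.sum_eq_zero fun x hx => Multiset.mem_singleton.mp (Multiset.mem_of_le hU hx)
  have hWσ : W = Multiset.replicate (Multiset.card W) (∑ j ∈ E, Pi.single j 1) :=
    Multiset.eq_replicate_of_mem fun x hx => Multiset.mem_singleton.mp (Multiset.mem_of_le hW hx)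
  refine ⟨⟨A, Multiset.nodup_of_le hA E.nodup⟩, Finset.val_le_iff.mp hA, Multiset.card U,
    Multiset.card W, by simpa using Multiset.card_le_card hU,
    by simpa using Multiset.card_le_card hW, by simp, ?_⟩
  rw [Multiset.sum_add, Multiset.sum_add, hU0, zero_add, hWσ, Multiset.sum_replicate,
    Multiset.card_replicate]
  rfl

lemma sum_apply_eq_zero_of_le_unitVectorSeq {E : Finset ι} {o : ι} (ho : o ∉ E)
    {T : Multiset (ι → ZMod 2)} (h : T ≤ unitVectorSeq E) : T.sum o = 0 := by
  obtain ⟨A, hA, u, w, -, -, -, hsum⟩ := exists_of_le_unitVectorSeq h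
  have hoA : o ∉ A := fun h => ho (hA h)
  simp [hsum, ho, hoA]

lemma card_add_card_eq_of_sum_eq_add {A B E : Finset ι} (hB : B ⊆ E)
    (h : (∑ j ∈ A, Pi.single j 1 : ι → ZMod 2) =
      ∑ j ∈ B, Pi.single j 1 + ∑ j ∈ E, Pi.single j 1) :
    #A + #B = #E := by
  rw [← sum_single_sdiff hB] at h
  rw [sum_single_injective h, card_sdiff_add_card_eq_card hB]

lemma card_le_card_add_one_of_sum_eq {E : Finset ι} {T₁ T₂ : Multiset (ι → ZMod 2)}
    (h₁ : T₁ ≤ unitVectorSeq E) (h₂ : T₂ ≤ unitVectorSeq E) (hsum : T₁.sum = T₂.sum)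
    (hcard : Multiset.card T₁ + Multiset.card T₂ ≤ #E) :
    Multiset.card T₁ ≤ Multiset.card T₂ + 1 := by
  obtain ⟨A, hA, u₁, w₁, hu₁, hw₁, hc₁, hs₁⟩ := exists_of_le_unitVectorSeq h₁
  obtain ⟨B, hB, u₂, w₂, hu₂, hw₂, hc₂, hs₂⟩ := exists_of_le_unitVectorSeq h₂
  rw [hs₁, hs₂] at hsum
  interval_cases w₁ <;> interval_cases w₂
  · have := sum_single_injective (by simpa using hsum)
    subst this; omega
  · have := card_add_card_eq_of_sum_eq_add hB (by simpa using hsum)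
    omega
  · have := card_add_card_eq_of_sum_eq_add hA (by simpa using hsum.symm)
    omega
  · have := sum_single_injective (add_right_cancel hsum)
    subst this; omega

lemma sum_unitVectorSeq_add_map_add (E : Finset ι) (hE : Even #E) (v : ι → ZMod 2) :
    (unitVectorSeq E + (unitVectorSeq E).map (v + ·)).sum = 0 := by
  obtain ⟨m, hm⟩ := hE
  rw [Multiset.sum_add, Multiset.sum_map_add_left, add_left_comm, pi_zmod_two_add_self, add_zero,
    card_unitVectorSeq, hm, show m + m + 2 = (m + 1) + (m + 1) by ring, add_nsmul, ← nsmul_add,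
    pi_zmod_two_add_self, nsmul_zero]

theorem not_exists_le_zero_sum_of_odd {E : Finset ι} {o : ι} (ho : o ∉ E) {k : ℕ}
    (hk : Odd k) (hE : #E = 2 * k) :
    ¬ ∃ T ≤ unitVectorSeq E + (unitVectorSeq E).map (Pi.single o 1 + ·),
      Multiset.card T = 2 * k ∧ T.sum = 0 := by
  rintro ⟨T, hT, hcard, hsum⟩
  obtain ⟨T₁, h₁, T', hT', rfl⟩ := Multiset.exists_eq_add_of_le_add hT
  obtain ⟨T₂, h₂, rfl⟩ := Multiset.exists_eq_map_of_le_map hT'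
  rw [Multiset.card_add, Multiset.card_map] at hcard
  rw [Multiset.sum_add, Multiset.sum_map_add_left] at hsum
  obtain ⟨m, hm⟩ : Even (Multiset.card T₂) := by
    have := congrFun hsum o
    simp only [Pi.add_apply, Pi.smul_apply, sum_apply_eq_zero_of_le_unitVectorSeq ho h₁,
      sum_apply_eq_zero_of_le_unitVectorSeq ho h₂, Pi.single_eq_same, nsmul_one,
      zero_add, add_zero, Pi.zero_apply] at this
    exact ZMod.natCast_eq_zero_iff_even.mp this
  have hsum' : T₁.sum = T₂.sum := by
    rwa [hm, add_nsmul, ← nsmul_add, pi_zmod_two_add_self, nsmul_zero, zero_add,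
      add_eq_zero_iff_eq_neg, neg_eq_iff_add_eq_zero.mpr (pi_zmod_two_add_self _)] at hsum
  have := card_le_card_add_one_of_sum_eq h₁ h₂ hsum' (by omega)
  have := card_le_card_add_one_of_sum_eq h₂ h₁ hsum'.symm (by omega)
  obtain ⟨j, hj⟩ := hk
  omega

end ZeroSumConstruction

open ZeroSumConstruction

theorem construction_d_eq_two_k_add_one (k : ℕ) (hk : Odd k)
    (d : ℕ) (hd : d = 2 * k + 1) :
    let e : Fin d → (Fin d → ZMod 2) := fun j => Pi.single j 1
    let last : Fin d := ⟨d - 1, by omega⟩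
    let S : Multiset (Fin d → ZMod 2) :=
      {0} + Multiset.map e (Finset.univ.erase last).val
        + {∑ j ∈ Finset.univ.erase last, e j}
        + {e last} + Multiset.map (fun j => e last + e j) (Finset.univ.erase last).val
        + {e last + ∑ j ∈ Finset.univ.erase last, e j}
    Multiset.card S = 2 * d + 2 ∧ S.sum = 0 ∧
      ¬ ∃ T ≤ S, Multiset.card T = 2 * k ∧ T.sum = 0 := by
  intro e last S
  have hE : #(univ.erase last) = 2 * k := by
    rw [card_erase_of_mem (mem_univ _), card_univ, Fintype.card_fin]
    omega
  have hS : S = unitVectorSeq (univ.erase last) +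
      (unitVectorSeq (univ.erase last)).map (e last + ·) := by
    simp only [S, unitVectorSeq, Multiset.map_add, Multiset.map_singleton, Multiset.map_map,
      add_zero, add_assoc]
    rfl
  rw [hS]
  refine ⟨?_, sum_unitVectorSeq_add_map_add _ ⟨k, by omega⟩ _,
    not_exists_le_zero_sum_of_odd (notMem_erase _ _) hk hE⟩
  rw [Multiset.card_add, Multiset.card_map, card_unitVectorSeq, hE]
  omega
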